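/- arXiv:1309.2904 — 6 statements merged into one kernel-verified Lean document; each statement's English description precedes it below -/
import Mathlib

section
/- (Forward skew-product bound) Let â_{i,i−1} > 0 and b̂_{i,i−1} be declared relative skews and offsets along a chain 1,…,n, and write â_{j,1} := Π_{i=2}^{j} â_{i,i−1}. Suppose â_{j,1} ≥ 1 for all 2 ≤ j ≤ n. Suppose the time-stamps satisfy the parameter-consistency condition τ^{i,l} = â_{i,i−1}·τ^{i−1,r} + b̂_{i,i−1} for 2 ≤ i ≤ n, and causality τ^{i,l} ≤ τ^{i,r} for all i. Then Σ_{i=2}^{n} (τ^{i,l} − τ^{i−1,r}) ≤ ((â_{n,1} − 1)/â_{n,1})·τ^{n,l} + Σ_{i=2}^{n} b̂_{i,i−1}/â_{i,1}. -/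
/-!
Write `P j = ∏_{i=2}^{j} â_i`. Inductively, the accumulated gap is at most
`(1 - 1/P n) l n + Σ b̂_i / P_i`. Passing from `n` to `n + 1`, causality lets the weight
`1 - 1/P n ≥ 0` move from `l n` to `r n`, and consistency `r n = (l (n+1) - b̂ (n+1)) / â (n+1)`
turns `l (n+1) - r n / P n` into `(1 - 1/P (n+1)) l (n+1) + b̂ (n+1) / P (n+1)`.
-/

open Finset

lemma gap_step_le {A a b l l' r : ℝ} (hA : 1 ≤ A) (ha : 0 < a) (hl' : l' = a * r + b)
    (hlr : l ≤ r) :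
    (A - 1) / A * l + (l' - r) ≤ (A * a - 1) / (A * a) * l' + b / (A * a) := by
  have hA0 : 0 < A := by linarith
  have hweight : (A - 1) / A * l ≤ (A - 1) / A * r :=
    mul_le_mul_of_nonneg_left hlr (div_nonneg (by linarith) hA0.le)
  have hconsistent : (A - 1) / A * r + (l' - r)
      = (A * a - 1) / (A * a) * l' + b / (A * a) := by
    subst hl'
    field_simp
    ring
  linarith

theorem stmt5_general (n : ℕ) (ahat bhat l r : ℕ → ℝ)
    (hahat : ∀ i ∈ Finset.Icc 2 n, 0 < ahat i)
    (hprod : ∀ j ∈ Finset.Icc 2 n, 1 ≤ ∏ i ∈ Finset.Icc 2 j, ahat i)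
    (hcons : ∀ i ∈ Finset.Icc 2 n, l i = ahat i * r (i - 1) + bhat i)
    (hcaus : ∀ i, l i ≤ r i) :
    (∑ i ∈ Finset.Icc 2 n, (l i - r (i - 1)))
      ≤ ((∏ i ∈ Finset.Icc 2 n, ahat i) - 1) / (∏ i ∈ Finset.Icc 2 n, ahat i) * l n
        + ∑ i ∈ Finset.Icc 2 n, bhat i / (∏ k ∈ Finset.Icc 2 i, ahat k) := by
  induction n with
  | zero => simp
  | succ n ih =>
    rcases Nat.eq_zero_or_pos n with rfl | hn
    · simp
    have h2 : 2 ≤ n + 1 := by omega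
    have hsub : Icc 2 n ⊆ Icc 2 (n + 1) := Icc_subset_Icc_right n.le_succ
    have hlast : n + 1 ∈ Icc 2 (n + 1) := right_mem_Icc.2 h2
    have hP : 1 ≤ ∏ i ∈ Icc 2 n, ahat i := by
      rcases Nat.lt_or_ge n 2 with hn2 | hn2
      · simp [Icc_eq_empty_of_lt hn2]
      · exact hprod n (mem_Icc.2 ⟨hn2, n.le_succ⟩)
    have hstep := gap_step_le hP (hahat _ hlast) (hcons _ hlast) (hcaus n)
    have hprev := ih (fun i hi => hahat i (hsub hi)) (fun j hj => hprod j (hsub hj))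
      (fun i hi => hcons i (hsub hi))
    rw [sum_Icc_succ_top h2, sum_Icc_succ_top h2, prod_Icc_succ_top h2]
    simp only [Nat.add_sub_cancel] at hstep ⊢
    linarith

/-- Forward skew-product bound: with declared skews
â i = â_{i,i−1} > 0 and offsets b̂ i = b̂_{i,i−1} along a chain 1,…,n,
skew products â_{j,1} = ∏_{i=2}^{j} â_{i,i−1} all ≥ 1, parameter consistency
l i = â i · r (i−1) + b̂ i, and causality l i ≤ r i, we have
Σ_{i=2}^{n} (l i − r (i−1))
  ≤ ((â_{n,1} − 1)/â_{n,1})·l n + Σ_{i=2}^{n} b̂_{i,i−1}/â_{i,1}. -/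
theorem stmt5 (n : ℕ) (hn : 2 ≤ n) (ahat bhat l r : ℕ → ℝ)
    (hahat : ∀ i ∈ Finset.Icc 2 n, 0 < ahat i)
    (hprod : ∀ j ∈ Finset.Icc 2 n, 1 ≤ ∏ i ∈ Finset.Icc 2 j, ahat i)
    (hcons : ∀ i ∈ Finset.Icc 2 n, l i = ahat i * r (i - 1) + bhat i)
    (hcaus : ∀ i, l i ≤ r i) :
    (∑ i ∈ Finset.Icc 2 n, (l i - r (i - 1)))
      ≤ ((∏ i ∈ Finset.Icc 2 n, ahat i) - 1) / (∏ i ∈ Finset.Icc 2 n, ahat i) * l n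
        + ∑ i ∈ Finset.Icc 2 n, bhat i / (∏ k ∈ Finset.Icc 2 i, ahat k) :=
  stmt5_general n ahat bhat l r hahat hprod hcons hcaus
end

section
/- (Reverse skew-product bound) With the same setup as the forward bound, suppose instead the reverse skew products satisfy â_{n,n−j} := Π_{i=n−j+1}^{n} â_{i,i−1} ≤ 1 for 1 ≤ j ≤ n−1. Then for every 1 ≤ j ≤ n−1, Σ_{i=1}^{j} (τ^{n−(i−1),l} − τ^{n−i,r}) ≤ (â_{n,n−j} − 1)·τ^{n−j,r} + b̂_{n,n−1} + Σ_{i=n−j+1}^{n−1} â_{n,i}·b̂_{i,i−1}. -/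
/-!
Composing the consistency maps `x ↦ â_i x + b̂_i` from node `m` to node `n` gives the affine map
`x ↦ skewProd â m n * x + chainOffset â b̂ m n`, where `skewProd â m n` is the paper's `â_{n,m}`.
Peeling off the first hop shows, by downward induction on `m`, that the sum of the hop terms
`l (i + 1) - r i` plus the corrections `(1 - â_{n,i}) * (r i - l i)` equals exactly
`(â_{n,m} - 1) * r m + chainOffset â b̂ m n`; causality and `â_{n,i} ≤ 1` make every correction
nonnegative.
-/

open Finset

variable (a b : ℕ → ℝ)

def skewProd (m n : ℕ) : ℝ := ∏ k ∈ Ioc m n, a k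

def chainOffset (m n : ℕ) : ℝ := ∑ i ∈ Ioc m n, skewProd a i n * b i

variable {a b} {l r : ℕ → ℝ}

@[simp] lemma skewProd_self (n : ℕ) : skewProd a n n = 1 := by simp [skewProd]

@[simp] lemma chainOffset_self (n : ℕ) : chainOffset a b n n = 0 := by simp [chainOffset]

lemma skewProd_eq_mul {m n : ℕ} (h : m < n) :
    skewProd a m n = a (m + 1) * skewProd a (m + 1) n := by
  rw [skewProd, ← insert_Ioc_add_one_left_eq_Ioc h, prod_insert (by simp), skewProd]

lemma chainOffset_eq_add {m n : ℕ} (h : m < n) :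
    chainOffset a b m n = skewProd a (m + 1) n * b (m + 1) + chainOffset a b (m + 1) n := by
  rw [chainOffset, ← insert_Ioc_add_one_left_eq_Ioc h, sum_insert (by simp), chainOffset]

lemma sum_delay_add_sum_residence_eq {m n : ℕ} (hmn : m ≤ n)
    (hcons : ∀ i ∈ Ioc m n, l i = a i * r (i - 1) + b i) :
    ∑ i ∈ Ico m n, (l (i + 1) - r i) + ∑ i ∈ Ioc m n, (1 - skewProd a i n) * (r i - l i)
      = (skewProd a m n - 1) * r m + chainOffset a b m n := by
  induction hmn using Nat.decreasingInduction with
  | self => simp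
  | of_succ m hm ih =>
    have hl : l (m + 1) = a (m + 1) * r m + b (m + 1) := by
      simpa using hcons (m + 1) (mem_Ioc.2 ⟨m.lt_succ_self, hm⟩)
    rw [sum_eq_sum_Ico_succ_bot hm, ← insert_Ioc_add_one_left_eq_Ioc hm, sum_insert (by simp),
      skewProd_eq_mul hm, chainOffset_eq_add hm]
    have := ih fun i hi => hcons i (Ioc_subset_Ioc_left (by omega) hi)
    linear_combination this + skewProd a (m + 1) n * hl

lemma sum_delay_le {m n : ℕ} (hmn : m ≤ n)
    (hcons : ∀ i ∈ Ioc m n, l i = a i * r (i - 1) + b i) (hcaus : ∀ i ∈ Ioc m n, l i ≤ r i)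
    (hskew : ∀ i ∈ Ioc m n, skewProd a i n ≤ 1) :
    ∑ i ∈ Ico m n, (l (i + 1) - r i) ≤ (skewProd a m n - 1) * r m + chainOffset a b m n := by
  rw [← sum_delay_add_sum_residence_eq hmn hcons, le_add_iff_nonneg_right]
  exact sum_nonneg fun i hi => mul_nonneg (sub_nonneg.2 (hskew i hi)) (sub_nonneg.2 (hcaus i hi))

theorem stmt6_general (n : ℕ) (ahat bhat l r : ℕ → ℝ)
    (hrev : ∀ j ∈ Finset.Icc 1 (n - 1),
      (∏ i ∈ Finset.Icc (n - j + 1) n, ahat i) ≤ 1)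
    (hcons : ∀ i ∈ Finset.Icc 2 n, l i = ahat i * r (i - 1) + bhat i)
    (hcaus : ∀ i, l i ≤ r i) :
    ∀ j ∈ Finset.Icc 1 (n - 1),
      (∑ i ∈ Finset.Icc 1 j, (l (n - (i - 1)) - r (n - i)))
        ≤ ((∏ i ∈ Finset.Icc (n - j + 1) n, ahat i) - 1) * r (n - j) + bhat n
          + ∑ i ∈ Finset.Icc (n - j + 1) (n - 1),
              (∏ k ∈ Finset.Icc (i + 1) n, ahat k) * bhat i := by
  intro j hj
  obtain ⟨hj1, hjn⟩ := mem_Icc.1 hj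
  have hprod (i : ℕ) : ∏ k ∈ Icc (i + 1) n, ahat k = skewProd ahat i n := by
    rw [Icc_add_one_left_eq_Ioc, skewProd]
  have hdelays : ∑ i ∈ Icc 1 j, (l (n - (i - 1)) - r (n - i))
      = ∑ i ∈ Ico (n - j) n, (l (i + 1) - r i) := by
    refine sum_nbij' (n - ·) (n - ·) ?_ ?_ ?_ ?_ ?_ <;> intro i hi <;>
      simp only [mem_Icc, mem_Ico] at hi ⊢
    any_goals omega
    rw [show n - (i - 1) = n - i + 1 by omega]
  have hoffset : bhat n + ∑ i ∈ Icc (n - j + 1) (n - 1), (∏ k ∈ Icc (i + 1) n, ahat k) * bhat i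
      = chainOffset ahat bhat (n - j) n := by
    rw [chainOffset, Ioc_eq_cons_Ioo (by omega), sum_cons, skewProd_self, one_mul,
      Icc_sub_one_right_eq_Ico_of_not_isMin (by rw [not_isMin_iff_ne_bot, Nat.bot_eq_zero]; omega),
      Ico_add_one_left_eq_Ioo]
    simp only [hprod]
  rw [hdelays, hprod, add_assoc, hoffset]
  refine sum_delay_le (by omega) (fun i hi => hcons i ?_) (fun i _ => hcaus i) fun i hi => ?_
  · simp only [mem_Ioc, mem_Icc] at hi ⊢
    omega
  · obtain rfl | hin := eq_or_ne i n
    · simp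
    rw [mem_Ioc] at hi
    have := hrev (n - i) (mem_Icc.2 ⟨by omega, by omega⟩)
    rwa [show n - (n - i) = i by omega, hprod] at this

/-- Reverse skew-product bound: with declared skews
â i = â_{i,i−1} > 0 and offsets b̂ i = b̂_{i,i−1}, reverse skew products
â_{n,n−j} = ∏_{i=n−j+1}^{n} â_{i,i−1} ≤ 1 for 1 ≤ j ≤ n−1, parameter
consistency l i = â i · r (i−1) + b̂ i for 2 ≤ i ≤ n, and causality
l i ≤ r i, we have for every 1 ≤ j ≤ n−1:
Σ_{i=1}^{j} (τ^{n−(i−1),l} − τ^{n−i,r})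
  ≤ (â_{n,n−j} − 1)·τ^{n−j,r} + b̂_{n,n−1}
    + Σ_{i=n−j+1}^{n−1} â_{n,i}·b̂_{i,i−1}. -/
theorem stmt6 (n : ℕ) (hn : 2 ≤ n) (ahat bhat l r : ℕ → ℝ)
    (hahat : ∀ i ∈ Finset.Icc 2 n, 0 < ahat i)
    (hrev : ∀ j ∈ Finset.Icc 1 (n - 1),
      (∏ i ∈ Finset.Icc (n - j + 1) n, ahat i) ≤ 1)
    (hcons : ∀ i ∈ Finset.Icc 2 n, l i = ahat i * r (i - 1) + bhat i)
    (hcaus : ∀ i, l i ≤ r i) :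
    ∀ j ∈ Finset.Icc 1 (n - 1),
      (∑ i ∈ Finset.Icc 1 j, (l (n - (i - 1)) - r (n - i)))
        ≤ ((∏ i ∈ Finset.Icc (n - j + 1) n, ahat i) - 1) * r (n - j) + bhat n
          + ∑ i ∈ Finset.Icc (n - j + 1) (n - 1),
              (∏ k ∈ Finset.Icc (i + 1) n, ahat k) * bhat i :=
  stmt6_general n ahat bhat l r hrev hcons hcaus
end

section
/- (Lower bound on total forwarding delay) In the chain 1,…,n with good endpoints, suppose the true clocks of nodes 1 and n are affine with relative parameters a_{n,1} > 0 and b_{n,1}, so τ^{n,l} evaluated at the send instant satisfies τ^{n,l} ≥ a_{n,1}·τ^{1,r} + b_{n,1} (packet received no earlier than sent, and node n's clock is affine in node 1's). If the time-stamps satisfy parameter consistency with declared skews â and offsets b̂ and causality, then Σ_{j=2}^{n−1} (τ^{j,r} − τ^{j,l}) ≥ ((a_{n,1} − â_{n,1})/â_{n,i*})·τ^{1,r} + ((b_{n,1} − b̂_{n,1})/â_{n,i*}). -/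
/-!
Unrolling parameter consistency along the chain writes the final receive time as the declared
affine map applied to the initial send time, plus the forwarding delays `r j - l j` of the
intermediate nodes, each weighted by the declared skew `∏_{k=j+1}^{n} â_k` of the rest of the
chain. That weight is `â_{n,1} / â_{j,1} ≤ â_{n,1} / â_{i*,1}` by minimality of `i*`, and the delays
are nonnegative by causality; comparing with the true receive time `a_{n,1} r₁ + b_{n,1} ≤ l n`
gives the bound.
-/

open Finset

lemma prod_Icc_mul_prod_Icc_succ {M : Type*} [CommMonoid M] (f : ℕ → M) {a j n : ℕ}
    (haj : a ≤ j + 1) (hjn : j ≤ n) :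
    (∏ i ∈ Icc a j, f i) * ∏ i ∈ Icc (j + 1) n, f i = ∏ i ∈ Icc a n, f i := by
  simp only [← Ico_add_one_right_eq_Icc]
  exact prod_Ico_consecutive f haj (by omega)

lemma prod_Icc_succ_le_div {f : ℕ → ℝ} {a j n : ℕ} {c : ℝ} (hf : ∀ i ∈ Icc a n, 0 < f i)
    (hc : 0 < c) (hcj : c ≤ ∏ i ∈ Icc a j, f i) (haj : a ≤ j + 1) (hjn : j ≤ n) :
    ∏ i ∈ Icc (j + 1) n, f i ≤ (∏ i ∈ Icc a n, f i) / c := by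
  have hpos : ∀ i ∈ Icc a n, 0 ≤ f i := fun i hi => (hf i hi).le
  rw [← prod_Icc_mul_prod_Icc_succ f haj hjn, mul_div_right_comm]
  refine le_mul_of_one_le_left (prod_nonneg fun i hi => hpos i ?_) ((one_le_div hc).2 hcj)
  simp only [mem_Icc] at hi ⊢
  omega

section Chain

variable {ahat bhat l r : ℕ → ℝ}

lemma chain_send_unfold {m : ℕ} (hm : 1 ≤ m)
    (hcons : ∀ j ∈ Icc 2 m, l j = ahat j * r (j - 1) + bhat j) :
    r m = (∏ i ∈ Icc 2 m, ahat i) * r 1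
      + ∑ j ∈ Icc 2 m, (∏ k ∈ Icc (j + 1) m, ahat k) * (bhat j + (r j - l j)) := by
  induction m, hm using Nat.le_induction with
  | base => simp
  | succ m hm ih =>
    have hl : l (m + 1) = ahat (m + 1) * r m + bhat (m + 1) := by
      simpa using hcons (m + 1) (mem_Icc.2 ⟨by omega, le_rfl⟩)
    have hweight : ∀ j ∈ Icc 2 m, (∏ k ∈ Icc (j + 1) (m + 1), ahat k) * (bhat j + (r j - l j))
        = ahat (m + 1) * ((∏ k ∈ Icc (j + 1) m, ahat k) * (bhat j + (r j - l j))) := by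
      intro j hj
      rw [prod_Icc_succ_top (by rw [mem_Icc] at hj; omega)]
      ring
    rw [prod_Icc_succ_top (by omega), sum_Icc_succ_top (by omega), sum_congr rfl hweight,
      ← mul_sum, Icc_eq_empty_of_lt (Nat.lt_succ_self (m + 1)), prod_empty]
    linear_combination ahat (m + 1) * ih (fun j hj => hcons j (by simp only [mem_Icc] at hj ⊢; omega)) + hl

lemma chain_receive_unfold {m : ℕ} (hm : 1 ≤ m)
    (hcons : ∀ j ∈ Icc 2 (m + 1), l j = ahat j * r (j - 1) + bhat j) :
    l (m + 1) = (∏ i ∈ Icc 2 (m + 1), ahat i) * r 1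
      + ∑ j ∈ Icc 2 (m + 1), (∏ k ∈ Icc (j + 1) (m + 1), ahat k) * bhat j
      + ∑ j ∈ Icc 2 m, (∏ k ∈ Icc (j + 1) (m + 1), ahat k) * (r j - l j) := by
  have hsend := chain_send_unfold (by omega) hcons
  have hlast : ∑ j ∈ Icc 2 (m + 1), (∏ k ∈ Icc (j + 1) (m + 1), ahat k) * (r j - l j)
      = ∑ j ∈ Icc 2 m, (∏ k ∈ Icc (j + 1) (m + 1), ahat k) * (r j - l j)
        + (r (m + 1) - l (m + 1)) := by
    rw [sum_Icc_succ_top (by omega), Icc_eq_empty_of_lt (Nat.lt_succ_self (m + 1)), prod_empty,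
      one_mul]
  simp only [mul_add, sum_add_distrib] at hsend
  linarith

end Chain

theorem stmt9_general (n : ℕ) (ahat bhat l r : ℕ → ℝ) (a_n1 b_n1 : ℝ)
    (hahat : ∀ i ∈ Finset.Icc 2 n, 0 < ahat i)
    (istar : ℕ) (histar : istar ∈ Finset.Icc 2 n)
    (hmin : ∀ k ∈ Finset.Icc 1 n,
      (∏ i ∈ Finset.Icc 2 istar, ahat i) ≤ ∏ i ∈ Finset.Icc 2 k, ahat i)
    (hcons : ∀ j ∈ Finset.Icc 2 n, l j = ahat j * r (j - 1) + bhat j)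
    (hcaus : ∀ j, l j ≤ r j)
    (hrecv : a_n1 * r 1 + b_n1 ≤ l n) :
    (∑ j ∈ Finset.Icc 2 (n - 1), (r j - l j))
      ≥ (a_n1 - ∏ i ∈ Finset.Icc 2 n, ahat i)
          / ((∏ i ∈ Finset.Icc 2 n, ahat i) / (∏ i ∈ Finset.Icc 2 istar, ahat i))
          * r 1
        + (b_n1 - ∑ j ∈ Finset.Icc 2 n, (∏ k ∈ Finset.Icc (j + 1) n, ahat k) * bhat j)
            / ((∏ i ∈ Finset.Icc 2 n, ahat i) / (∏ i ∈ Finset.Icc 2 istar, ahat i)) := by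
  rw [mem_Icc] at histar
  obtain ⟨m, rfl⟩ : ∃ m, n = m + 1 := ⟨n - 1, by omega⟩
  have hAi : 0 < ∏ i ∈ Icc 2 istar, ahat i :=
    prod_pos fun i hi => hahat i (by simp only [mem_Icc] at hi ⊢; omega)
  have hdelays : ∑ j ∈ Icc 2 m, (∏ k ∈ Icc (j + 1) (m + 1), ahat k) * (r j - l j)
      ≤ (∏ i ∈ Icc 2 (m + 1), ahat i) / (∏ i ∈ Icc 2 istar, ahat i) * ∑ j ∈ Icc 2 m, (r j - l j) := by
    rw [mul_sum]
    refine sum_le_sum fun j hj => mul_le_mul_of_nonneg_right ?_ (sub_nonneg.2 (hcaus j))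
    rw [mem_Icc] at hj
    exact prod_Icc_succ_le_div hahat hAi (hmin j (by simp only [mem_Icc]; omega)) (by omega)
      (by omega)
  rw [chain_receive_unfold (by omega) hcons] at hrecv
  rw [Nat.add_sub_cancel, ge_iff_le, div_mul_eq_mul_div, ← add_div,
    div_le_iff₀ (div_pos (prod_pos hahat) hAi)]
  linarith

/-- Lower bound on total forwarding delay: in the chain 1,…,n
with good endpoints whose true clocks are relatively affine with parameters
a_{n,1} > 0 and b_{n,1}, so that the final receive time satisfies
l n ≥ a_{n,1}·r 1 + b_{n,1}, if the time-stamps satisfy parameter consistency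
with declared skews â and offsets b̂ and causality, then
Σ_{j=2}^{n−1} (r j − l j)
  ≥ ((a_{n,1} − â_{n,1})/â_{n,i*})·r 1 + (b_{n,1} − b̂_{n,1})/â_{n,i*}. -/
theorem stmt9 (n : ℕ) (hn : 2 ≤ n) (ahat bhat l r : ℕ → ℝ) (a_n1 b_n1 : ℝ)
    (hahat : ∀ i ∈ Finset.Icc 2 n, 0 < ahat i)
    (istar : ℕ) (histar : istar ∈ Finset.Icc 2 n)
    (hmin : ∀ k ∈ Finset.Icc 1 n,
      (∏ i ∈ Finset.Icc 2 istar, ahat i) ≤ ∏ i ∈ Finset.Icc 2 k, ahat i)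
    (hle1 : (∏ i ∈ Finset.Icc 2 istar, ahat i) ≤ 1)
    (hcons : ∀ j ∈ Finset.Icc 2 n, l j = ahat j * r (j - 1) + bhat j)
    (hcaus : ∀ j, l j ≤ r j)
    (ha : 0 < a_n1)
    (hrecv : a_n1 * r 1 + b_n1 ≤ l n) :
    (∑ j ∈ Finset.Icc 2 (n - 1), (r j - l j))
      ≥ (a_n1 - ∏ i ∈ Finset.Icc 2 n, ahat i)
          / ((∏ i ∈ Finset.Icc 2 n, ahat i) / (∏ i ∈ Finset.Icc 2 istar, ahat i))
          * r 1
        + (b_n1 - ∑ j ∈ Finset.Icc 2 n, (∏ k ∈ Finset.Icc (j + 1) n, ahat k) * bhat j)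
            / ((∏ i ∈ Finset.Icc 2 n, ahat i) / (∏ i ∈ Finset.Icc 2 istar, ahat i)) :=
  stmt9_general n ahat bhat l r a_n1 b_n1 hahat istar histar hmin hcons hcaus hrecv
end

section
/- (Consistency check succeeds for late start times) Under the chain setup, if the declared composed skew differs from the true one, a_{n,1} − â_{n,1} > 0, then for any delay bound K > 0 there exists a threshold T₀ (explicitly T₀ := (n·K·â_{n,i*} + b̂_{n,1} − b_{n,1})/(a_{n,1} − â_{n,1})) such that if node 1 initiates the timing packet at a time τ^{1,r} = τ^1(t₁) > T₀, then for any time-stamps satisfying parameter consistency and causality, some intermediate node j ∈ {2,…,n−1} must have forwarding delay τ^{j,r} − τ^{j,l} > K. -/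
/-! If every intermediate node forwards within `K`, then `r j ≤ â_j r (j-1) + b̂_j + K` along the
chain, and unrolling this affine recursion bounds the receive time `l n` by
`â_{n,1} r 1 + b̂_{n,1} + K ∑_j â_{n,j+1}`. Each tail product `â_{n,j+1} = â_{n,1} / â_{j,1}` is at most
`â_{n,1} / â_{i*,1}` by minimality of `i*`, so `l n ≤ â_{n,1} r 1 + b̂_{n,1} + n K â_{n,i*}`. Against
`l n ≥ a_{n,1} r 1 + b_{n,1}` this forces `r 1 ≤ T₀`. -/

open Finset

theorem le_prod_mul_add_sum_of_le_mul_add {R : Type*} [CommSemiring R] [PartialOrder R]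
    [IsOrderedRing R] {x a c : ℕ → R} {s t : ℕ} (hst : s ≤ t)
    (ha : ∀ i ∈ Icc (s + 1) t, 0 ≤ a i)
    (hx : ∀ i ∈ Icc (s + 1) t, x i ≤ a i * x (i - 1) + c i) :
    x t ≤ (∏ i ∈ Icc (s + 1) t, a i) * x s
      + ∑ j ∈ Icc (s + 1) t, (∏ k ∈ Icc (j + 1) t, a k) * c j := by
  induction t, hst using Nat.le_induction with
  | base => simp
  | succ t hst ih =>
    have hmem : t + 1 ∈ Icc (s + 1) (t + 1) := mem_Icc.2 ⟨by omega, le_rfl⟩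
    have hprev := ih (fun i hi => ha i (Icc_subset_Icc_right t.le_succ hi))
      (fun i hi => hx i (Icc_subset_Icc_right t.le_succ hi))
    have htail : ∀ j ∈ Icc (s + 1) t,
        ∏ k ∈ Icc (j + 1) (t + 1), a k = a (t + 1) * ∏ k ∈ Icc (j + 1) t, a k := fun j hj => by
      rw [prod_Icc_succ_top (by have := (mem_Icc.1 hj).2; omega), mul_comm]
    have hprod : ∏ i ∈ Icc (s + 1) (t + 1), a i = a (t + 1) * ∏ i ∈ Icc (s + 1) t, a i := by
      rw [prod_Icc_succ_top (by omega), mul_comm]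
    have hsum : ∑ j ∈ Icc (s + 1) (t + 1), (∏ k ∈ Icc (j + 1) (t + 1), a k) * c j
        = a (t + 1) * (∑ j ∈ Icc (s + 1) t, (∏ k ∈ Icc (j + 1) t, a k) * c j) + c (t + 1) := by
      rw [sum_Icc_succ_top (by omega), sum_congr rfl fun j hj => by rw [htail j hj],
        Icc_eq_empty (show ¬t + 1 + 1 ≤ t + 1 by omega), prod_empty, one_mul, mul_sum]
      simp only [mul_assoc]
    rw [hprod, hsum]
    calc x (t + 1) ≤ a (t + 1) * x t + c (t + 1) := hx (t + 1) hmem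
      _ ≤ a (t + 1) * ((∏ i ∈ Icc (s + 1) t, a i) * x s
            + ∑ j ∈ Icc (s + 1) t, (∏ k ∈ Icc (j + 1) t, a k) * c j) + c (t + 1) := by
        gcongr
        exact ha (t + 1) hmem
      _ = _ := by ring

theorem prod_Icc_succ_le_div_s10 {K : Type*} [Field K] [LinearOrder K] [IsStrictOrderedRing K]
    {a : ℕ → K} {s j t : ℕ} (hsj : s ≤ j) (hjt : j ≤ t) (ha : ∀ i ∈ Icc (j + 1) t, 0 ≤ a i)
    {m : K} (hm : 0 < m) (hmj : m ≤ ∏ i ∈ Icc (s + 1) j, a i) :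
    ∏ k ∈ Icc (j + 1) t, a k ≤ (∏ i ∈ Icc (s + 1) t, a i) / m := by
  have hsplit : (∏ i ∈ Icc (s + 1) j, a i) * ∏ k ∈ Icc (j + 1) t, a k
      = ∏ i ∈ Icc (s + 1) t, a i := by
    simp only [Icc_add_one_left_eq_Ioc]
    exact prod_Ioc_consecutive a hsj hjt
  rw [le_div_iff₀ hm, ← hsplit, mul_comm]
  exact mul_le_mul_of_nonneg_right hmj (prod_nonneg ha)

theorem sum_prod_Icc_succ_le_mul_div {K : Type*} [Field K] [LinearOrder K]
    [IsStrictOrderedRing K] {a : ℕ → K} {n : ℕ} (ha : ∀ i ∈ Icc 2 n, 0 ≤ a i) {m : K}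
    (hm : 0 < m) (hmin : ∀ k ∈ Icc 1 n, m ≤ ∏ i ∈ Icc 2 k, a i) :
    ∑ j ∈ Icc 2 n, ∏ k ∈ Icc (j + 1) n, a k ≤ n * ((∏ i ∈ Icc 2 n, a i) / m) := by
  have hbound : ∀ j ∈ Icc 2 n, ∏ k ∈ Icc (j + 1) n, a k ≤ (∏ i ∈ Icc 2 n, a i) / m :=
    fun j hj =>
      have hj := mem_Icc.1 hj
      prod_Icc_succ_le_div_s10 (s := 1) (by omega) hj.2
        (fun i hi => ha i (Icc_subset_Icc_left (by omega) hi)) hm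
        (hmin j (mem_Icc.2 ⟨by omega, hj.2⟩))
  calc ∑ j ∈ Icc 2 n, ∏ k ∈ Icc (j + 1) n, a k ≤ #(Icc 2 n) • ((∏ i ∈ Icc 2 n, a i) / m) :=
        sum_le_card_nsmul _ _ _ hbound
    _ ≤ n * ((∏ i ∈ Icc 2 n, a i) / m) := by
      rw [nsmul_eq_mul, Nat.card_Icc]
      gcongr
      · exact div_nonneg (prod_nonneg ha) hm.le
      · omega

theorem stmt10_general (n : ℕ) (hn : 2 ≤ n) (ahat bhat l r : ℕ → ℝ) (a_n1 b_n1 K : ℝ)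
    (hahat : ∀ i ∈ Finset.Icc 2 n, 0 < ahat i)
    (istar : ℕ) (histar : istar ∈ Finset.Icc 2 n)
    (hmin : ∀ k ∈ Finset.Icc 1 n,
      (∏ i ∈ Finset.Icc 2 istar, ahat i) ≤ ∏ i ∈ Finset.Icc 2 k, ahat i)
    (hcons : ∀ j ∈ Finset.Icc 2 n, l j = ahat j * r (j - 1) + bhat j)
    (hrecv : a_n1 * r 1 + b_n1 ≤ l n)
    (hK : 0 < K)
    (hgap : 0 < a_n1 - ∏ i ∈ Finset.Icc 2 n, ahat i)
    (hlate : r 1 >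
      ((n : ℝ) * K * ((∏ i ∈ Finset.Icc 2 n, ahat i) / (∏ i ∈ Finset.Icc 2 istar, ahat i))
        + (∑ j ∈ Finset.Icc 2 n, (∏ k ∈ Finset.Icc (j + 1) n, ahat k) * bhat j)
        - b_n1)
      / (a_n1 - ∏ i ∈ Finset.Icc 2 n, ahat i)) :
    ∃ j ∈ Finset.Icc 2 (n - 1), r j - l j > K := by
  by_contra! hdelay
  set Pn := ∏ i ∈ Icc 2 n, ahat i
  set Ps := ∏ i ∈ Icc 2 istar, ahat i
  have hPs : 0 < Ps := prod_pos fun i hi =>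
    hahat i (Icc_subset_Icc_right (mem_Icc.1 histar).2 hi)
  -- Putting `l n` in place of `r n` lets the last hop, which has no forwarding delay, enter the
  -- same recursion.
  have hstep : ∀ i ∈ Icc (1 + 1) n, Function.update r n (l n) i
      ≤ ahat i * Function.update r n (l n) (i - 1) + (bhat i + K) := by
    intro i hi
    obtain ⟨hi2, hin⟩ := mem_Icc.1 hi
    rw [Function.update_of_ne (by omega : i - 1 ≠ n)]
    rcases hin.lt_or_eq with hlt | rfl
    · have := hdelay i (mem_Icc.2 ⟨hi2, by omega⟩)
      rw [Function.update_of_ne hlt.ne]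
      linarith [hcons i hi]
    · rw [Function.update_self, hcons i hi]
      linarith
  have hchain : l n ≤ Pn * r 1 + ∑ j ∈ Icc 2 n, (∏ k ∈ Icc (j + 1) n, ahat k) * (bhat j + K) := by
    simpa [Function.update_of_ne (by omega : 1 ≠ n)] using
      le_prod_mul_add_sum_of_le_mul_add (by omega) (fun i hi => (hahat i hi).le) hstep
  have htail := sum_prod_Icc_succ_le_mul_div (fun i hi => (hahat i hi).le) hPs hmin
  simp only [mul_add, sum_add_distrib, ← sum_mul] at hchain
  have hdelays := mul_le_mul_of_nonneg_right htail hK.le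
  rw [gt_iff_lt, div_lt_iff₀ hgap] at hlate
  linarith

/-- Consistency check succeeds for late start times: if the
declared composed skew differs from the true one, a_{n,1} − â_{n,1} > 0, then
for K > 0 and threshold T₀ := (n·K·â_{n,i*} + b̂_{n,1} − b_{n,1})/(a_{n,1} − â_{n,1}),
whenever node 1 initiates its timing packet at time r 1 > T₀, any time-stamps
satisfying parameter consistency and causality must have some intermediate
node j ∈ {2,…,n−1} with forwarding delay r j − l j > K. -/
theorem stmt10 (n : ℕ) (hn : 2 ≤ n) (ahat bhat l r : ℕ → ℝ) (a_n1 b_n1 K : ℝ)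
    (hahat : ∀ i ∈ Finset.Icc 2 n, 0 < ahat i)
    (istar : ℕ) (histar : istar ∈ Finset.Icc 2 n)
    (hmin : ∀ k ∈ Finset.Icc 1 n,
      (∏ i ∈ Finset.Icc 2 istar, ahat i) ≤ ∏ i ∈ Finset.Icc 2 k, ahat i)
    (hle1 : (∏ i ∈ Finset.Icc 2 istar, ahat i) ≤ 1)
    (hcons : ∀ j ∈ Finset.Icc 2 n, l j = ahat j * r (j - 1) + bhat j)
    (hcaus : ∀ j, l j ≤ r j)
    (ha : 0 < a_n1)
    (hrecv : a_n1 * r 1 + b_n1 ≤ l n)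
    (hK : 0 < K)
    (hgap : 0 < a_n1 - ∏ i ∈ Finset.Icc 2 n, ahat i)
    (hlate : r 1 >
      ((n : ℝ) * K * ((∏ i ∈ Finset.Icc 2 n, ahat i) / (∏ i ∈ Finset.Icc 2 istar, ahat i))
        + (∑ j ∈ Finset.Icc 2 n, (∏ k ∈ Finset.Icc (j + 1) n, ahat k) * bhat j)
        - b_n1)
      / (a_n1 - ∏ i ∈ Finset.Icc 2 n, ahat i)) :
    ∃ j ∈ Finset.Icc 2 (n - 1), r j - l j > K :=
  stmt10_general n hn ahat bhat l r a_n1 b_n1 K hahat istar histar hmin hcons hrecv hK hgap hlate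
end

section
/- (Clock estimate divergence bound) Suppose each node i estimates a reference clock by τ̂^r_i(s) := â_{ri}·s where |â_{ri} − a_{ri}| ≤ ε_a, the true clocks are affine with skews bounded by a_max ≥ 1 and offsets |b_{ij}| ≤ a_max·U₀, and all local times lie in [0, a_max·T_life]. Then for any two nodes i, k and any reference time t with τ^i(t), τ^k(t) ∈ [0, a_max·T_life], the estimates satisfy |â_{ri}·τ^i(t) − â_{rk}·τ^k(t)| ≤ 2·a_max²·ε_a·T_life + a_max²·U₀. -/
/-- Clock estimate divergence bound: if nodes i and k estimate
a reference clock by τ̂^r_i := â_ri·τ^i(t) with skew estimates accurate to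
within ε_a (|â_ri − a_ri| ≤ ε_a), the true reference-clock readings agree up
to offsets (|a_ri·τ^i(t) − a_rk·τ^k(t)| ≤ a_max²·U₀), and the local times
τ^i(t), τ^k(t) lie in [0, a_max·T_life], then
|â_ri·τ^i(t) − â_rk·τ^k(t)| ≤ 2·a_max²·ε_a·T_life + a_max²·U₀. -/
theorem stmt13 (amax U₀ εa Tlife a_ri a_rk ahat_ri ahat_rk τi τk : ℝ)
    (hamax : 1 ≤ amax) (hU : 0 ≤ U₀) (hεa : 0 ≤ εa) (hT : 0 ≤ Tlife)
    (hi : |ahat_ri - a_ri| ≤ εa) (hk : |ahat_rk - a_rk| ≤ εa)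
    (hτi : τi ∈ Set.Icc 0 (amax * Tlife))
    (hτk : τk ∈ Set.Icc 0 (amax * Tlife))
    (hdiff : |a_ri * τi - a_rk * τk| ≤ amax ^ 2 * U₀) :
    |ahat_ri * τi - ahat_rk * τk| ≤ 2 * amax ^ 2 * εa * Tlife + amax ^ 2 * U₀ := by
  obtain ⟨hτi0, hτi1⟩ := hτi
  obtain ⟨hτk0, hτk1⟩ := hτk
  have h1 : |(ahat_ri - a_ri) * τi| ≤ εa * (amax * Tlife) := by
    rw [abs_mul, abs_of_nonneg hτi0]
    exact mul_le_mul hi hτi1 hτi0 hεa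
  have h2 : |(ahat_rk - a_rk) * τk| ≤ εa * (amax * Tlife) := by
    rw [abs_mul, abs_of_nonneg hτk0]
    exact mul_le_mul hk hτk1 hτk0 hεa
  have key : ahat_ri * τi - ahat_rk * τk =
      (ahat_ri - a_ri) * τi - (ahat_rk - a_rk) * τk + (a_ri * τi - a_rk * τk) := by ring
  calc |ahat_ri * τi - ahat_rk * τk|
      ≤ |(ahat_ri - a_ri) * τi - (ahat_rk - a_rk) * τk| + |a_ri * τi - a_rk * τk| := by
        rw [key]; exact abs_add_le _ _
    _ ≤ (|(ahat_ri - a_ri) * τi| + |(ahat_rk - a_rk) * τk|) + amax ^ 2 * U₀ := by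
        gcongr; exact abs_sub _ _
    _ ≤ (εa * (amax * Tlife) + εa * (amax * Tlife)) + amax ^ 2 * U₀ := by gcongr
    _ ≤ 2 * amax ^ 2 * εa * Tlife + amax ^ 2 * U₀ := by nlinarith [mul_nonneg (mul_nonneg (mul_nonneg (le_trans zero_le_one hamax) (sub_nonneg.2 hamax)) hεa) hT]
end

section
/- (Overhead fraction bound) Given constants c₁, c₂, c₃, c₄ > 0, for every ε_d ∈ (0,1) and ε_l ∈ (0,1) there exist choices of parameters n_iter ∈ ℕ, B > 0, D > 0, ε_a > 0, T_life > 0 such that: (i) n_iter/(n_iter + 2ⁿ·k_r) ≥ 1 − ε_l; (ii) B/(c₁·log T_life + c₂/ε_a + B + c₃·D + c₄·D) ≥ 1 − ε_d; (iii) n_iter·(c₁·log T_life + c₂/ε_a + B + c₃·D + c₄·D) ≤ T_life; (iv) 2·a_max²·ε_a·T_life + a_max²·U₀ ≤ D. -/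
set_option maxHeartbeats 1600000 in
/-- Overhead fraction bound: for any constants
c₁, c₂, c₃, c₄ > 0, number of nodes n, number of rate vectors k_r,
a_max ≥ 1, U₀ ≥ 0, and any ε_d, ε_l ∈ (0,1), there exist parameters
n_iter ∈ ℕ, B > 0, D > 0, ε_a > 0, T_life > 0 satisfying simultaneously:
(i) n_iter/(n_iter + 2ⁿ·k_r) ≥ 1 − ε_l;
(ii) B/(c₁·log T_life + c₂/ε_a + B + c₃·D + c₄·D) ≥ 1 − ε_d;
(iii) n_iter·(c₁·log T_life + c₂/ε_a + B + c₃·D + c₄·D) ≤ T_life;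
(iv) 2·a_max²·ε_a·T_life + a_max²·U₀ ≤ D. -/
theorem stmt15 (c₁ c₂ c₃ c₄ amax U₀ εd εl : ℝ) (n kr : ℕ)
    (hc₁ : 0 < c₁) (hc₂ : 0 < c₂) (hc₃ : 0 < c₃) (hc₄ : 0 < c₄)
    (hamax : 1 ≤ amax) (hU : 0 ≤ U₀)
    (hεd : εd ∈ Set.Ioo (0 : ℝ) 1) (hεl : εl ∈ Set.Ioo (0 : ℝ) 1) :
    ∃ (niter : ℕ) (B D εa Tlife : ℝ),
      0 < B ∧ 0 < D ∧ 0 < εa ∧ 0 < Tlife ∧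
      (niter : ℝ) / ((niter : ℝ) + 2 ^ n * (kr : ℝ)) ≥ 1 - εl ∧
      B / (c₁ * Real.log Tlife + c₂ / εa + B + c₃ * D + c₄ * D) ≥ 1 - εd ∧
      (niter : ℝ) * (c₁ * Real.log Tlife + c₂ / εa + B + c₃ * D + c₄ * D)
        ≤ Tlife ∧
      2 * amax ^ 2 * εa * Tlife + amax ^ 2 * U₀ ≤ D := by
  obtain ⟨hεd0, hεd1⟩ := hεd
  obtain ⟨hεl0, hεl1⟩ := hεl
  set M : ℝ := 2 ^ n * (kr : ℝ) with hM
  have hM0 : 0 ≤ M := by positivity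
  set N : ℕ := max 1 ⌈(1 - εl) / εl * M⌉₊ with hNdef
  have hN1 : (1 : ℕ) ≤ N := le_max_left _ _
  have hN0 : (0 : ℝ) < N := by exact_mod_cast lt_of_lt_of_le one_pos hN1
  have hNM : (1 - εl) / εl * M ≤ N := by
    calc (1 - εl) / εl * M ≤ (⌈(1 - εl) / εl * M⌉₊ : ℝ) := Nat.le_ceil _
    _ ≤ N := by exact_mod_cast le_max_right _ _
  have hNl : (1 - εl) * M ≤ εl * N := by
    rw [div_mul_eq_mul_div, div_le_iff₀ hεl0] at hNM
    linarith [hNM]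
  have hamax0 : (0 : ℝ) < amax := lt_of_lt_of_le one_pos hamax
  set K : ℝ := N / εd with hK
  have hK0 : 0 < K := div_pos hN0 hεd0
  set εa : ℝ := εd / (4 * N * (c₃ + c₄) * amax ^ 2) with hεa
  have hεa0 : 0 < εa := by positivity
  have key : K * ((c₃ + c₄) * (2 * amax ^ 2 * εa)) = 1 / 2 := by
    rw [hK, hεa]
    field_simp
    ring
  set C : ℝ := K * (c₂ / εa) + K * ((c₃ + c₄) * (amax ^ 2 * U₀ + 1)) with hC
  have hC0 : 0 < C := by positivity
  set T : ℝ := max ((8 * K * c₁) ^ 2) (max (4 * C) 1) with hT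
  have hT1 : (1 : ℝ) ≤ T := le_trans (le_max_right _ _) (le_max_right _ _)
  have hT0 : 0 < T := lt_of_lt_of_le one_pos hT1
  have hTC : 4 * C ≤ T := le_trans (le_max_left _ _) (le_max_right _ _)
  have hT2 : (8 * K * c₁) ^ 2 ≤ T := le_max_left _ _
  set s : ℝ := Real.sqrt T with hs
  have hss : s * s = T := Real.mul_self_sqrt (le_of_lt hT0)
  have hs0 : 0 < s := Real.sqrt_pos.mpr hT0
  have hsge : 8 * K * c₁ ≤ s := by
    rw [hs]
    exact Real.le_sqrt' (by positivity) |>.mpr hT2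
  have hlogT : Real.log T ≤ 2 * s := by
    rw [← hss, Real.log_mul (ne_of_gt hs0) (ne_of_gt hs0)]
    have := Real.log_le_sub_one_of_pos hs0
    linarith
  have hlogT0 : 0 ≤ Real.log T := Real.log_nonneg hT1
  set D : ℝ := 2 * amax ^ 2 * εa * T + amax ^ 2 * U₀ + 1 with hD
  have hD0 : 0 < D := by positivity
  set O : ℝ := c₁ * Real.log T + c₂ / εa + c₃ * D + c₄ * D with hO
  have hO0 : 0 < O := by positivity
  set B : ℝ := (1 - εd) / εd * O with hB
  have hB0 : 0 < B := by
    apply mul_pos (div_pos (by linarith) hεd0) hO0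
  clear_value M N K εa C T s D O B
  have hden : c₁ * Real.log T + c₂ / εa + B + c₃ * D + c₄ * D = O / εd := by
    rw [hB, hO]; field_simp; ring
  refine ⟨N, B, D, εa, T, hB0, hD0, hεa0, hT0, ?_, ?_, ?_, ?_⟩
  · -- (i)
    rw [ge_iff_le, le_div_iff₀ (by linarith : (0:ℝ) < (N:ℝ) + M)]
    nlinarith
  · -- (ii)
    have heq : (1 - εd) / εd * O / (O / εd) = 1 - εd := by
      field_simp
    rw [hden, hB, heq]
  · -- (iii)
    rw [hden]
    have hKO : (N : ℝ) * (O / εd) = K * O := by rw [hK]; ring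
    rw [hKO]
    have expand : K * O = K * (c₁ * Real.log T) + K * ((c₃ + c₄) * (2 * amax ^ 2 * εa)) * T + C := by
      rw [hO, hD, hC]; ring
    rw [expand, key]
    have h1 : K * (c₁ * Real.log T) ≤ T / 4 := by
      have : K * (c₁ * Real.log T) ≤ K * (c₁ * (2 * s)) := by
        apply mul_le_mul_of_nonneg_left _ (le_of_lt hK0)
        exact mul_le_mul_of_nonneg_left hlogT (le_of_lt hc₁)
      nlinarith
    linarith
  · -- (iv)
    rw [hD]; linarith
end
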